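/- arXiv:1403.5665 — 3 statements merged into one kernel-verified Lean document; each statement's English description precedes it below -/
import Mathlib

section
/- There exists an online square-packing strategy σ such that for every finite sequence x₁, …, xₙ of side lengths with xᵢ ∈ (1/4, 1/2] for all i and ∑_{i=1}^{n} xᵢ² ≤ 3/8, the placed squares σ(x₁,…,xᵢ) + [0,xᵢ]² (for i = 1,…,n) are all contained in the unit square [0,1]² and have pairwise disjoint interiors. (The Ceiling Packing subroutine packs any sequence of medium squares with total area at most 3/8 into the unit square.) -/
/-!
First fit on two shelves of height `1/2`: a square goes on the bottom shelf `[0,1] × [0,1/2]`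
if it still fits there, and otherwise on the top shelf `[0,1] × [1/2,1]`.  Only the width of the
top shelf can overflow.  A square of side `y ≥ 1/4` has area `y² ≥ y/4`, and the first square `s`
sent to the top shelf found a bottom shelf of width `b > 1 - s`; so once the top shelf has width
`t > 0` the total area `A` is at least `b/4 + s² + (t - s)/4 ≥ 3/16 + t/4`.  Hence `A ≤ 3/8` forces
`t ≤ 3/4`; the invariant `AreaBound` carries this bound, scaled by `4`.
-/

open Set

/-- The axis-parallel square with lower-left corner `p` and side length `x`. -/
def placedSquare (p : ℝ × ℝ) (x : ℝ) : Set (ℝ × ℝ) :=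
  Icc p.1 (p.1 + x) ×ˢ Icc p.2 (p.2 + x)

/-- Given an online strategy `σ : List ℝ → ℝ × ℝ` and a sequence of side lengths
`x : Fin n → ℝ`, the `i`-th placed square: its lower-left corner is determined by
the prefix `x₁, …, xᵢ`. -/
def place (σ : List ℝ → ℝ × ℝ) {n : ℕ} (x : Fin n → ℝ) (i : Fin n) : Set (ℝ × ℝ) :=
  placedSquare (σ ((List.ofFn x).take (i + 1))) (x i)

namespace CeilingPacking

/-- The state `s` records the widths `(s.1, s.2)` already used on the bottom and top shelf. -/
noncomputable def step (s : ℝ × ℝ) (y : ℝ) : ℝ × ℝ :=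
  if s.1 + y ≤ 1 then (s.1 + y, s.2) else (s.1, s.2 + y)

noncomputable def corner (s : ℝ × ℝ) (y : ℝ) : ℝ × ℝ :=
  if s.1 + y ≤ 1 then (s.1, 0) else (s.2, 1 / 2)

noncomputable def shelves (l : List ℝ) : ℝ × ℝ :=
  l.foldl step 0

noncomputable def strategy (l : List ℝ) : ℝ × ℝ :=
  corner (shelves l.dropLast) (l.getLastD 0)

theorem shelves_concat (l : List ℝ) (y : ℝ) : shelves (l ++ [y]) = step (shelves l) y := by
  simp only [shelves, List.foldl_append, List.foldl_cons, List.foldl_nil]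

theorem strategy_concat (l : List ℝ) (y : ℝ) : strategy (l ++ [y]) = corner (shelves l) y := by
  rw [strategy, List.dropLast_concat, List.getLastD_concat]

theorem le_step (s : ℝ × ℝ) {y : ℝ} (hy : 0 ≤ y) : s ≤ step s y := by
  unfold step
  split_ifs <;> exact Prod.mk_le_mk.2 ⟨by linarith, by linarith⟩

theorem le_foldl_step {l : List ℝ} (hl : ∀ y ∈ l, 0 ≤ y) (s : ℝ × ℝ) : s ≤ l.foldl step s := by
  induction l generalizing s with
  | nil => exact le_rfl
  | cons y l ih =>
    rw [List.forall_mem_cons] at hl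
    exact (le_step s hl.1).trans (ih hl.2 _)

theorem shelves_nonneg {l : List ℝ} (hl : ∀ y ∈ l, 0 ≤ y) : 0 ≤ shelves l :=
  le_foldl_step hl 0

theorem shelves_le_of_prefix {l₁ l₂ : List ℝ} (h : l₁ <+: l₂) (hl : ∀ y ∈ l₂, 0 ≤ y) :
    shelves l₁ ≤ shelves l₂ := by
  obtain ⟨l, rfl⟩ := h
  rw [shelves, shelves, List.foldl_append]
  exact le_foldl_step (fun y hy => hl y (List.mem_append_right _ hy)) _

def AreaBound (A : ℝ) (s : ℝ × ℝ) : Prop :=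
  s.1 + s.2 ≤ 4 * A ∧ (s.2 = 0 ∨ 3 / 4 + s.2 ≤ 4 * A)

theorem AreaBound.step {A : ℝ} {s : ℝ × ℝ} {y : ℝ} (h : AreaBound A s) (hy : 1 / 4 ≤ y) :
    AreaBound (A + y ^ 2) (step s y) := by
  obtain ⟨hwidth, htop⟩ := h
  have harea : y ≤ 4 * y ^ 2 := by nlinarith
  unfold CeilingPacking.step
  split_ifs with hfit
  · exact ⟨by simp only; linarith, htop.imp id fun h => by simp only; linarith⟩
  · refine ⟨by simp only; linarith, Or.inr ?_⟩
    simp only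
    rcases htop with htop | htop
    · nlinarith [sq_nonneg (2 * y - 1 / 2)]
    · linarith

theorem AreaBound.foldl {A : ℝ} {s : ℝ × ℝ} (h : AreaBound A s) {l : List ℝ}
    (hl : ∀ y ∈ l, 1 / 4 ≤ y) :
    AreaBound (A + (l.map (· ^ 2)).sum) (l.foldl CeilingPacking.step s) := by
  induction l generalizing A s with
  | nil => simpa using h
  | cons y l ih =>
    rw [List.forall_mem_cons] at hl
    rw [List.map_cons, List.sum_cons, ← add_assoc]
    exact ih (h.step hl.1) hl.2

theorem shelves_snd_le_one {l : List ℝ} (hl : ∀ y ∈ l, 1 / 4 ≤ y)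
    (harea : (l.map (· ^ 2)).sum ≤ 3 / 8) : (shelves l).2 ≤ 1 := by
  have h : AreaBound (l.map (· ^ 2)).sum (shelves l) := by
    have h := (show AreaBound 0 0 by simp [AreaBound]).foldl hl
    rwa [zero_add] at h
  rcases h.2 with h0 | h
  · rw [h0]; norm_num
  · linarith

theorem placedSquare_corner_subset {s : ℝ × ℝ} {y : ℝ} (hs : 0 ≤ s) (hy : y ≤ 1 / 2)
    (htop : (step s y).2 ≤ 1) :
    placedSquare (corner s y) y ⊆ Icc (0 : ℝ) 1 ×ˢ Icc (0 : ℝ) 1 := by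
  obtain ⟨hs₁, hs₂⟩ : 0 ≤ s.1 ∧ 0 ≤ s.2 := hs
  unfold step at htop
  unfold corner
  split_ifs with hfit <;> simp only [hfit, if_true, if_false] at htop <;>
    exact prod_mono (Icc_subset_Icc (by simp only; linarith) (by simp only; linarith))
      (Icc_subset_Icc (by norm_num) (by simp only; linarith))

theorem disjoint_interior_placedSquare_corner {s s' : ℝ × ℝ} {x y : ℝ} (hx : x ≤ 1 / 2)
    (h : step s x ≤ s') :
    Disjoint (interior (placedSquare (corner s x) x))
      (interior (placedSquare (corner s' y) y)) := by
  simp only [placedSquare, interior_prod_eq, interior_Icc, Set.disjoint_left]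
  rintro ⟨a, c⟩ ⟨ha, hc⟩ ⟨ha', hc'⟩
  have h' := Prod.le_def.1 h
  unfold step at h'
  unfold corner at ha hc ha' hc'
  -- A later square that fits on the bottom shelf is narrower than an earlier one that did not.
  split_ifs at h' ha hc ha' hc' <;> simp only [mem_Ioo] at ha hc ha' hc' <;> linarith [h'.1, h'.2]

theorem take_succ_ofFn {n : ℕ} (x : Fin n → ℝ) (i : Fin n) :
    (List.ofFn x).take (i + 1) = (List.ofFn x).take i ++ [x i] := by
  rw [List.take_add_one, List.getElem?_ofFn, dif_pos i.isLt, Option.toList_some]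

theorem place_strategy {n : ℕ} (x : Fin n → ℝ) (i : Fin n) :
    place strategy x i = placedSquare (corner (shelves ((List.ofFn x).take i)) (x i)) (x i) := by
  rw [place, take_succ_ofFn, strategy_concat]

theorem step_shelves_take {n : ℕ} (x : Fin n → ℝ) (i : Fin n) :
    step (shelves ((List.ofFn x).take i)) (x i) = shelves ((List.ofFn x).take (i + 1)) := by
  rw [take_succ_ofFn, shelves_concat]

end CeilingPacking

open CeilingPacking in
/-- The Ceiling Packing subroutine: there is an online square-packing strategy that packs
any online sequence of medium squares (side lengths in (1/4, 1/2]) with total area at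
most 3/8 into the unit square. -/
theorem ceiling_packing_medium_squares :
    ∃ σ : List ℝ → ℝ × ℝ,
      ∀ (n : ℕ) (x : Fin n → ℝ),
        (∀ i, 1 / 4 < x i ∧ x i ≤ 1 / 2) →
        (∑ i, (x i) ^ 2) ≤ 3 / 8 →
        (∀ i, place σ x i ⊆ Icc (0 : ℝ) 1 ×ˢ Icc (0 : ℝ) 1) ∧
        (∀ i j, i ≠ j →
          Disjoint (interior (place σ x i)) (interior (place σ x j))) := by
  refine ⟨strategy, fun n x hx harea => ?_⟩
  set l := List.ofFn x
  have hquarter : ∀ y ∈ l, 1 / 4 ≤ y := by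
    simpa [l, List.mem_ofFn] using fun i => (hx i).1.le
  have hpos : ∀ y ∈ l, 0 ≤ y := fun y hy => by linarith [hquarter y hy]
  have hpos_take (k : ℕ) : ∀ y ∈ l.take k, 0 ≤ y := fun y hy => hpos y (List.mem_of_mem_take hy)
  have htop : (shelves l).2 ≤ 1 :=
    shelves_snd_le_one hquarter (by rwa [List.map_ofFn, List.sum_ofFn])
  refine ⟨fun i => ?_, fun i j hij => ?_⟩
  · rw [place_strategy]
    refine placedSquare_corner_subset (shelves_nonneg (hpos_take i)) (hx i).2 ?_
    rw [step_shelves_take]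
    exact (shelves_le_of_prefix (List.take_prefix _ _) hpos).2.trans htop
  · wlog hlt : i < j generalizing i j
    · exact (this j i hij.symm (hij.symm.lt_of_le (not_lt.1 hlt))).symm
    rw [place_strategy, place_strategy]
    refine disjoint_interior_placedSquare_corner (hx i).2 ?_
    rw [step_shelves_take]
    exact shelves_le_of_prefix (List.take_prefix_take_left hlt) (hpos_take j)
end

section
/- Let h > 0 and w > 0, let x₁, …, xₙ be real numbers with h/2 < xᵢ ≤ h for all i (the side lengths of squares packed into a shelf of width w and height h), and let x be a real number with h/2 < x ≤ h such that x₁ + ⋯ + xₙ + x > w (the next square does not fit into the shelf). Then x₁² + ⋯ + xₙ² + x² > w·h/2 − (h/2)² + (1/2)·h·x. (Shelf-end density lemma: the total area of the squares packed into the shelf plus the area of the overflowing square exceeds half the shelf area minus (h/2)² plus hx/2.) -/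
/-! Each packed side exceeds `h/2`, so its area is at least `h/2` times its side, and the packed
area exceeds `(h/2)(w - x)` because the squares overflow the shelf. What remains is
`(x - h/2)² ≥ 0`. -/

open Finset

theorem Finset.mul_sum_le_sum_sq {ι R : Type*} [CommRing R] [LinearOrder R] [IsStrictOrderedRing R]
    (s : Finset ι) (a : ι → R) {c : R} (hc : 0 ≤ c) (ha : ∀ i ∈ s, c ≤ a i) :
    c * ∑ i ∈ s, a i ≤ ∑ i ∈ s, a i ^ 2 := by
  rw [mul_sum]
  refine sum_le_sum fun i hi => ?_
  rw [sq]
  exact mul_le_mul_of_nonneg_right (ha i hi) (hc.trans (ha i hi))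

theorem shelf_end_density_general (h w : ℝ) (hh : 0 < h)
    (n : ℕ) (xs : Fin n → ℝ) (hxs : ∀ i, h / 2 < xs i ∧ xs i ≤ h)
    (x : ℝ)
    (hover : (∑ i, xs i) + x > w) :
    (∑ i, (xs i) ^ 2) + x ^ 2 > w * h / 2 - (h / 2) ^ 2 + (1 / 2) * h * x := by
  have packed_area : h / 2 * ∑ i, xs i ≤ ∑ i, xs i ^ 2 :=
    univ.mul_sum_le_sum_sq xs (by positivity) fun i _ => (hxs i).1.le
  have overflow : h / 2 * (w - x) < h / 2 * ∑ i, xs i :=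
    mul_lt_mul_of_pos_left (by linarith) (by positivity)
  nlinarith [sq_nonneg (x - h / 2)]

/-- Shelf-end density lemma (Moon–Moser): if squares of side lengths
`x₁, …, xₙ ∈ (h/2, h]` are packed into a shelf of width `w` and height `h`, and a
further square of side `x ∈ (h/2, h]` does not fit (i.e. `x₁ + ⋯ + xₙ + x > w`),
then the total area of the packed squares plus the area of the overflowing square
exceeds `w·h/2 − (h/2)² + h·x/2`. -/
theorem shelf_end_density (h w : ℝ) (hh : 0 < h) (hw : 0 < w)
    (n : ℕ) (xs : Fin n → ℝ) (hxs : ∀ i, h / 2 < xs i ∧ xs i ≤ h)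
    (x : ℝ) (hx₁ : h / 2 < x) (hx₂ : x ≤ h)
    (hover : (∑ i, xs i) + x > w) :
    (∑ i, (xs i) ^ 2) + x ^ 2 > w * h / 2 - (h / 2) ^ 2 + (1 / 2) * h * x :=
  shelf_end_density_general h w hh n xs hxs x hover
end

section
/- There exists a valid online placement strategy σ such that for every finite sequence x₁, …, xₙ of positive side lengths and every m with 1 ≤ m ≤ n, one has ∑_{i=1}^{m} xᵢ² ≥ (1/8) · Eₘ², where Eₘ is the minimum side length of an axis-parallel square containing the first m placed squares σ(x₁,…,xᵢ) + [0,xᵢ]², i = 1,…,m. (The Dynamic Brick Algorithm maintains a packing density of at least 1/8 for any input sequence of squares in a dynamic square container.) -/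
open Set

/-- An online placement strategy is valid if, for every finite sequence of positive
side lengths, the placed squares have pairwise disjoint interiors. -/
def ValidStrategy (σ : List ℝ → ℝ × ℝ) : Prop :=
  ∀ (n : ℕ) (x : Fin n → ℝ), (∀ i, 0 < x i) →
    ∀ i j, i ≠ j → Disjoint (interior (place σ x i)) (interior (place σ x j))

/-- The minimum side length of an axis-parallel square containing the set `S`. -/
noncomputable def minSide (S : Set (ℝ × ℝ)) : ℝ :=
  sInf {s : ℝ | ∃ a b : ℝ, S ⊆ Icc a (a + s) ×ˢ Icc b (b + s)}

/-!
Each square of side `x` is rounded up to a *brick* of order `k`, the least `k` with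
`x ^ 2 ≤ 2 ^ k`: a rectangle with sides `√2 ^ k` and `√2 ^ (k + 1)`, weighted `2 ^ k ≤ 2 x ^ 2`.
Since a brick of order `k + 1` is the union of two bricks of order `k`, free space is managed
like a buddy allocator inside a container brick of order `T` at the origin: the free bricks have
pairwise distinct orders, and a square goes into the smallest free brick that is large enough,
halved repeatedly down to the needed order. The container is enlarged only when every free brick
is too small; the free bricks then weigh at most as much as the new square's brick, which keeps
the occupied bricks at weight at least `2 ^ (T - 1)`. The container fits in a square of area
`2 ^ (T + 1)`, hence `E ^ 2 ≤ 4 · 2 ^ (T - 1) ≤ 4 · ∑ 2 ^ kᵢ ≤ 8 · ∑ xᵢ ^ 2`.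
-/

lemma minSide_nonneg {S : Set (ℝ × ℝ)} (hS : S.Nonempty) : 0 ≤ minSide S := by
  refine Real.sInf_nonneg fun t ⟨a, b, hsub⟩ => ?_
  obtain ⟨q, hq⟩ := hS
  have := (hsub hq).1
  linarith [this.1, this.2]

lemma minSide_le {S : Set (ℝ × ℝ)} (hS : S.Nonempty) {a b t : ℝ}
    (h : S ⊆ Icc a (a + t) ×ˢ Icc b (b + t)) : minSide S ≤ t := by
  refine csInf_le ⟨0, fun t ⟨a, b, hsub⟩ => ?_⟩ ⟨a, b, h⟩
  obtain ⟨q, hq⟩ := hS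
  have := (hsub hq).1
  linarith [this.1, this.2]

namespace DynamicBrick

lemma sqrt_two_zpow_pos (e : ℤ) : 0 < √2 ^ e := zpow_pos (by positivity) e

lemma sqrt_two_zpow_le_zpow {e e' : ℤ} (h : e ≤ e') : √2 ^ e ≤ √2 ^ e' :=
  zpow_le_zpow_right₀ Real.one_lt_sqrt_two.le h

lemma sqrt_two_zpow_sq (e : ℤ) : (√2 ^ e) ^ 2 = 2 ^ e := by
  rw [← zpow_natCast, ← zpow_mul, mul_comm, zpow_mul, zpow_natCast, Real.sq_sqrt zero_le_two]

lemma sqrt_two_zpow_add_two (e : ℤ) : √2 ^ (e + 2) = 2 * √2 ^ e := by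
  rw [zpow_add₀ (by positivity), zpow_two, Real.mul_self_sqrt zero_le_two, mul_comm]

/-- Bricks of order `j` are `width j × height j` rectangles with sides `√2 ^ j` and `√2 ^ (j + 1)`,
lying for even `j` and standing for odd `j`, so that a brick of order `j + 1` is the union of
two bricks of order `j`. -/
noncomputable def width (j : ℤ) : ℝ := √2 ^ (j + 1 - j % 2)

noncomputable def height (j : ℤ) : ℝ := √2 ^ (j + j % 2)

lemma width_succ_height_succ (j : ℤ) :
    (j % 2 = 0 ∧ width (j + 1) = width j ∧ height (j + 1) = 2 * height j) ∨
      (j % 2 = 1 ∧ width (j + 1) = 2 * width j ∧ height (j + 1) = height j) := by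
  unfold width height
  rcases Int.emod_two_eq_zero_or_one j with h | h
  · refine Or.inl ⟨h, ?_, ?_⟩
    · congr 1; omega
    · rw [← sqrt_two_zpow_add_two]; congr 1; omega
  · refine Or.inr ⟨h, ?_, ?_⟩
    · rw [← sqrt_two_zpow_add_two]; congr 1; omega
    · congr 1; omega

lemma width_pos (j : ℤ) : 0 < width j := sqrt_two_zpow_pos _

lemma height_pos (j : ℤ) : 0 < height j := sqrt_two_zpow_pos _

lemma width_mono : Monotone width := fun i j h => sqrt_two_zpow_le_zpow (by omega)

lemma height_mono : Monotone height := fun i j h => sqrt_two_zpow_le_zpow (by omega)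

lemma sqrt_two_zpow_le_width (j : ℤ) : √2 ^ j ≤ width j := sqrt_two_zpow_le_zpow (by omega)

lemma sqrt_two_zpow_le_height (j : ℤ) : √2 ^ j ≤ height j := sqrt_two_zpow_le_zpow (by omega)

lemma width_le_sqrt_two_zpow (j : ℤ) : width j ≤ √2 ^ (j + 1) := sqrt_two_zpow_le_zpow (by omega)

lemma height_le_sqrt_two_zpow (j : ℤ) : height j ≤ √2 ^ (j + 1) := sqrt_two_zpow_le_zpow (by omega)

structure Brick where
  order : ℤ
  corner : ℝ × ℝ

namespace Brick

def toSet (b : Brick) : Set (ℝ × ℝ) :=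
  Icc b.corner.1 (b.corner.1 + width b.order) ×ˢ Icc b.corner.2 (b.corner.2 + height b.order)

def Separated (a b : Brick) : Prop := Disjoint (interior a.toSet) (interior b.toSet)

lemma Separated.symm {a b : Brick} (h : Separated a b) : Separated b a := Disjoint.symm h

lemma Separated.mono {a a' b b' : Brick} (ha : a.toSet ⊆ a'.toSet) (hb : b.toSet ⊆ b'.toSet)
    (h : Separated a' b') : Separated a b :=
  Disjoint.mono (interior_mono ha) (interior_mono hb) h

lemma toSet_subset_of_le (p : ℝ × ℝ) {i j : ℤ} (h : i ≤ j) :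
    (⟨i, p⟩ : Brick).toSet ⊆ (⟨j, p⟩ : Brick).toSet :=
  prod_mono (Icc_subset_Icc_right (by simpa using width_mono h))
    (Icc_subset_Icc_right (by simpa using height_mono h))

/-- The buddy of `⟨j, p⟩`: the other half of `⟨j + 1, p⟩`. -/
noncomputable def buddy (j : ℤ) (p : ℝ × ℝ) : Brick :=
  ⟨j, p + if j % 2 = 0 then (0, height j) else (width j, 0)⟩

lemma buddy_subset (j : ℤ) (p : ℝ × ℝ) : (buddy j p).toSet ⊆ (⟨j + 1, p⟩ : Brick).toSet := by
  have := width_pos j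
  have := height_pos j
  rcases width_succ_height_succ j with ⟨hj, hw, hh⟩ | ⟨hj, hw, hh⟩ <;>
  · simp only [buddy, toSet, hj, hw, hh, Prod.fst_add, Prod.snd_add, reduceIte, one_ne_zero,
      add_zero]
    rintro q ⟨⟨h1, h2⟩, h3, h4⟩
    exact ⟨⟨by linarith, by linarith⟩, by linarith, by linarith⟩

lemma interior_toSet (b : Brick) :
    interior b.toSet = Ioo b.corner.1 (b.corner.1 + width b.order) ×ˢ
      Ioo b.corner.2 (b.corner.2 + height b.order) := by
  rw [toSet, interior_prod_eq, interior_Icc, interior_Icc]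

lemma separated_buddy (j : ℤ) (p : ℝ × ℝ) : Separated ⟨j, p⟩ (buddy j p) := by
  rw [Separated, interior_toSet, interior_toSet, disjoint_prod]
  rcases Int.emod_two_eq_zero_or_one j with hj | hj
  · right; simp [buddy, hj]
  · left; simp [buddy, hj]

end Brick

open Brick

noncomputable def sizeOrder (x : ℝ) : ℤ := Int.clog 2 (x ^ 2)

lemma sq_le_zpow_sizeOrder (x : ℝ) : x ^ 2 ≤ 2 ^ sizeOrder x := by
  exact_mod_cast Int.self_le_zpow_clog (R := ℝ) Nat.one_lt_two (x ^ (2 : ℕ))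

lemma zpow_sizeOrder_le {x : ℝ} (hx : 0 < x) : 2 ^ sizeOrder x ≤ 2 * x ^ 2 := by
  have h := Int.zpow_pred_clog_lt_self (R := ℝ) Nat.one_lt_two (pow_pos hx 2)
  rw [zpow_sub_one₀ (by norm_num)] at h
  push_cast at h
  rw [sizeOrder]
  linarith

lemma placedSquare_subset_toSet {x : ℝ} (hx : 0 < x) (q : ℝ × ℝ) :
    placedSquare q x ⊆ (⟨sizeOrder x, q⟩ : Brick).toSet := by
  have hfit : x ≤ √2 ^ sizeOrder x := by
    rw [← pow_le_pow_iff_left₀ hx.le (sqrt_two_zpow_pos _).le two_ne_zero, sqrt_two_zpow_sq]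
    exact sq_le_zpow_sizeOrder x
  exact prod_mono (Icc_subset_Icc_right (by simpa using hfit.trans (sqrt_two_zpow_le_width _)))
    (Icc_subset_Icc_right (by simpa using hfit.trans (sqrt_two_zpow_le_height _)))

lemma toSet_subset_square (j : ℤ) (p : ℝ × ℝ) :
    (⟨j, p⟩ : Brick).toSet ⊆ Icc p.1 (p.1 + √2 ^ (j + 1)) ×ˢ Icc p.2 (p.2 + √2 ^ (j + 1)) :=
  prod_mono (Icc_subset_Icc_right (by simpa using width_le_sqrt_two_zpow j))
    (Icc_subset_Icc_right (by simpa using height_le_sqrt_two_zpow j))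

section

/-- The bricks split off when `⟨j, p⟩` is halved repeatedly down to order `k`, always keeping the
half at `p`; their orders are `k, …, j - 1`. -/
noncomputable def splitOff (k j : ℤ) (p : ℝ × ℝ) : List Brick :=
  (List.range (j - k).toNat).map fun t : ℕ => buddy (k + t) p

variable {k j : ℤ} {p : ℝ × ℝ} {b : Brick}

lemma mem_splitOff : b ∈ splitOff k j p ↔ ∃ i, k ≤ i ∧ i < j ∧ b = buddy i p := by
  simp only [splitOff, List.mem_map, List.mem_range]
  constructor
  · rintro ⟨t, ht, rfl⟩
    exact ⟨k + t, by omega, by omega, rfl⟩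
  · rintro ⟨i, hki, hij, rfl⟩
    exact ⟨(i - k).toNat, by omega, by congr; omega⟩

lemma order_lt_of_mem_splitOff (hb : b ∈ splitOff k j p) : k ≤ b.order ∧ b.order < j := by
  obtain ⟨i, hki, hij, rfl⟩ := mem_splitOff.1 hb
  exact ⟨hki, hij⟩

lemma subset_of_mem_splitOff (hb : b ∈ splitOff k j p) : b.toSet ⊆ (⟨j, p⟩ : Brick).toSet := by
  obtain ⟨i, -, hij, rfl⟩ := mem_splitOff.1 hb
  exact (buddy_subset i p).trans (toSet_subset_of_le p hij)

lemma splitOff_sorted : (splitOff k j p).Pairwise (·.order < ·.order) := by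
  simp only [splitOff, List.pairwise_map]
  exact List.pairwise_lt_range.imp fun h => by simp [buddy, h]

lemma pairwise_separated_splitOff : (⟨k, p⟩ :: splitOff k j p).Pairwise Separated := by
  refine List.pairwise_cons.2 ⟨fun b hb => ?_, ?_⟩
  · obtain ⟨i, hki, -, rfl⟩ := mem_splitOff.1 hb
    exact (separated_buddy i p).mono (toSet_subset_of_le p hki) subset_rfl
  · simp only [splitOff, List.pairwise_map]
    refine List.pairwise_lt_range.imp fun {s t} hst => ?_
    exact (separated_buddy (k + t) p).mono
      ((buddy_subset _ p).trans (toSet_subset_of_le p (by omega))) subset_rfl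

/-- A brick of order `j` has area `√2 * 2 ^ j` but weight `2 ^ j`. -/
noncomputable def weight (l : List Brick) : ℝ := (l.map fun b => (2 : ℝ) ^ b.order).sum

@[simp] lemma weight_nil : weight [] = 0 := rfl

@[simp] lemma weight_cons (b : Brick) (l : List Brick) :
    weight (b :: l) = 2 ^ b.order + weight l :=
  List.sum_cons

@[simp] lemma weight_append (l l' : List Brick) : weight (l ++ l') = weight l + weight l' := by
  simp [weight]

lemma weight_splitOff (hkj : k ≤ j) : weight (splitOff k j p) = 2 ^ j - 2 ^ k := by
  have geom (n : ℕ) :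
      ((List.range n).map fun t : ℕ => (2 : ℝ) ^ (k + t)).sum = 2 ^ (k + n) - 2 ^ k := by
    induction n with
    | zero => simp
    | succ n ih =>
      rw [List.range_succ, List.map_append, List.sum_append, ih, Nat.cast_succ, ← add_assoc,
        zpow_add_one₀ two_ne_zero]
      simp only [List.map_cons, List.map_nil, List.sum_cons, List.sum_nil]
      ring
  rw [weight, splitOff, List.map_map]
  convert geom (j - k).toNat using 3
  · rfl
  · omega

/-- Distinct powers of two below `2 ^ k` sum to at most `2 ^ k`. -/
lemma weight_le_of_sorted {l : List Brick} (hl : l.Pairwise (·.order < ·.order))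
    (hk : ∀ b ∈ l, b.order < k) : weight l ≤ 2 ^ k := by
  have weight_le_of_antitone (l : List Brick) (hl : l.Pairwise fun a b => b.order < a.order) :
      ∀ k, (∀ b ∈ l, b.order < k) → weight l ≤ 2 ^ k := by
    induction l with
    | nil => intro k _; simp only [weight_nil]; positivity
    | cons a r ih =>
      intro k hk
      obtain ⟨har, hr⟩ := List.pairwise_cons.1 hl
      have hr := ih hr a.order har
      have ha : (2 : ℝ) ^ (a.order + 1) ≤ 2 ^ k :=
        zpow_le_zpow_right₀ one_le_two (hk a List.mem_cons_self)
      rw [zpow_add_one₀ two_ne_zero] at ha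
      rw [weight_cons]
      linarith
  simpa [weight] using weight_le_of_antitone l.reverse (List.pairwise_reverse.2 hl) k
    (by simpa using hk)

lemma pairwise_separated_append_of_subset {c : Brick} {pieces rest : List Brick}
    (hc : (c :: rest).Pairwise Separated) (hpieces : pieces.Pairwise Separated)
    (hsub : ∀ b ∈ pieces, b.toSet ⊆ c.toSet) : (pieces ++ rest).Pairwise Separated := by
  obtain ⟨hcrest, hrest⟩ := List.pairwise_cons.1 hc
  exact List.pairwise_append.2
    ⟨hpieces, hrest, fun a ha b hb => (hcrest b hb).mono (hsub a ha) subset_rfl⟩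

end

/-- The container is the brick `⟨order, 0⟩`; `free` lists the free bricks in it by increasing
order, `placed` the occupied ones, most recent first. -/
structure State where
  order : ℤ
  free : List Brick
  placed : List Brick

namespace State

variable {st : State} {k j : ℤ}

structure IsPacking (st : State) : Prop where
  free_sorted : st.free.Pairwise (·.order < ·.order)
  order_lt_of_mem_free : ∀ b ∈ st.free, b.order < st.order
  subset_container : ∀ b ∈ st.free ++ st.placed, b.toSet ⊆ (⟨st.order, 0⟩ : Brick).toSet
  separated : (st.free ++ st.placed).Pairwise Separated
  zpow_le_weight : 2 ^ st.order ≤ weight st.free + weight st.placed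

/-- Occupy a brick of order `k` cut from the smallest free brick of order at least `k`. -/
noncomputable def allocate (st : State) (k : ℤ) : State :=
  match st.free.dropWhile (·.order < k) with
  | [] => st
  | c :: hi =>
    ⟨st.order, st.free.takeWhile (·.order < k) ++ splitOff k c.order c.corner ++ hi,
      ⟨k, c.corner⟩ :: st.placed⟩

/-- Enlarge the container to order `j`; the old container becomes its part at the origin. -/
noncomputable def grow (st : State) (j : ℤ) : State :=
  ⟨j, st.free ++ splitOff st.order j 0, st.placed⟩

lemma exists_dropWhile_eq_cons {l : List Brick} (hk : ∃ b ∈ l, k ≤ b.order) :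
    ∃ c hi, l.dropWhile (·.order < k) = c :: hi := by
  cases h : l.dropWhile (·.order < k) with
  | nil =>
    obtain ⟨b, hb, hkb⟩ := hk
    have := List.dropWhile_eq_nil_iff.1 h b hb
    simp only [decide_eq_true_eq] at this
    omega
  | cons c hi => exact ⟨c, hi, rfl⟩

lemma allocate_eq {c : Brick} {hi : List Brick} (hc : st.free.dropWhile (·.order < k) = c :: hi) :
    st.allocate k = ⟨st.order, st.free.takeWhile (·.order < k) ++ splitOff k c.order c.corner ++ hi,
      ⟨k, c.corner⟩ :: st.placed⟩ := by
  rw [allocate, hc]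

lemma exists_allocate_eq (hk : ∃ b ∈ st.free, k ≤ b.order) :
    ∃ q free, st.allocate k = ⟨st.order, free, ⟨k, q⟩ :: st.placed⟩ := by
  obtain ⟨c, hi, hc⟩ := exists_dropWhile_eq_cons hk
  exact ⟨_, _, allocate_eq hc⟩

lemma pairwise_order_lt_splitOff_insert {lo hi : List Brick} {c : Brick}
    (h : (lo ++ c :: hi).Pairwise (·.order < ·.order)) (hlo : ∀ b ∈ lo, b.order < k) :
    (lo ++ splitOff k c.order c.corner ++ hi).Pairwise (·.order < ·.order) := by
  obtain ⟨hlo_sorted, hchi_sorted, hlo_chi⟩ := List.pairwise_append.1 h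
  obtain ⟨hc_hi, hhi_sorted⟩ := List.pairwise_cons.1 hchi_sorted
  refine List.pairwise_append.2 ⟨List.pairwise_append.2 ⟨hlo_sorted, splitOff_sorted,
    fun a ha b hb => (hlo a ha).trans_le (order_lt_of_mem_splitOff hb).1⟩, hhi_sorted, ?_⟩
  intro a ha b hb
  rcases List.mem_append.1 ha with ha | ha
  · exact hlo_chi a ha b (List.mem_cons_of_mem c hb)
  · exact (order_lt_of_mem_splitOff ha).2.trans (hc_hi b hb)

lemma pairwise_separated_splitOff_insert {lo hi rest : List Brick} {c : Brick} (hkc : k ≤ c.order)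
    (h : (lo ++ c :: hi ++ rest).Pairwise Separated) :
    (lo ++ splitOff k c.order c.corner ++ hi ++ ⟨k, c.corner⟩ :: rest).Pairwise Separated := by
  classical
  have hold : (lo ++ c :: hi ++ rest).Perm (c :: (lo ++ hi ++ rest)) := by
    simp only [List.perm_iff_count, List.count_append, List.count_cons]; intro a; omega
  have hnew : ((⟨k, c.corner⟩ :: splitOff k c.order c.corner) ++ (lo ++ hi ++ rest)).Perm
      (lo ++ splitOff k c.order c.corner ++ hi ++ ⟨k, c.corner⟩ :: rest) := by
    simp only [List.perm_iff_count, List.count_append, List.count_cons]; intro a; omega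
  refine (hnew.pairwise_iff Separated.symm).1 (pairwise_separated_append_of_subset
    ((hold.pairwise_iff Separated.symm).1 h) pairwise_separated_splitOff fun b hb => ?_)
  rcases List.mem_cons.1 hb with rfl | hb
  · exact toSet_subset_of_le c.corner hkc
  · exact subset_of_mem_splitOff hb

lemma IsPacking.allocate (h : st.IsPacking) (hk : ∃ b ∈ st.free, k ≤ b.order) :
    (st.allocate k).IsPacking := by
  obtain ⟨c, hi, hc⟩ := exists_dropWhile_eq_cons hk
  rw [allocate_eq hc]
  set lo := st.free.takeWhile (·.order < k)
  have hfree : st.free = lo ++ c :: hi := by rw [← hc]; exact List.takeWhile_append_dropWhile.symm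
  have hlo : ∀ b ∈ lo, b.order < k := fun b hb => by simpa using List.mem_takeWhile_imp hb
  have hkc : k ≤ c.order := by
    simpa [hc] using List.head_dropWhile_not (·.order < k) (l := st.free) (by simp [hc])
  obtain ⟨hsorted, hfree_lt, hsub, hsep, hweight⟩ := h
  rw [hfree] at hsorted hfree_lt hsub hsep hweight
  have hcsub : c.toSet ⊆ (⟨st.order, 0⟩ : Brick).toSet := hsub c (by simp)
  refine ⟨pairwise_order_lt_splitOff_insert hsorted hlo, ?_, ?_,
    pairwise_separated_splitOff_insert hkc hsep, ?_⟩
  · intro b hb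
    simp only [List.mem_append] at hb
    rcases hb with (hb | hb) | hb
    · exact hfree_lt b (by simp [hb])
    · exact (order_lt_of_mem_splitOff hb).2.trans (hfree_lt c (by simp))
    · exact hfree_lt b (by simp [hb])
  · intro b hb
    simp only [List.mem_append, List.mem_cons] at hb
    rcases hb with ((hb | hb) | hb) | rfl | hb
    · exact hsub b (by simp [hb])
    · exact (subset_of_mem_splitOff hb).trans hcsub
    · exact hsub b (by simp [hb])
    · exact (toSet_subset_of_le c.corner hkc).trans hcsub
    · exact hsub b (by simp [hb])
  · simp only [weight_append, weight_cons] at hweight ⊢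
    rw [weight_splitOff hkc]
    linarith

lemma IsPacking.grow (h : st.IsPacking) (hj : st.order ≤ j) : (st.grow j).IsPacking := by
  classical
  obtain ⟨hsorted, hfree_lt, hsub, hsep, hweight⟩ := h
  have hold : (⟨st.order, 0⟩ : Brick).toSet ⊆ (⟨j, 0⟩ : Brick).toSet := toSet_subset_of_le 0 hj
  unfold State.grow
  constructor
  · exact List.pairwise_append.2 ⟨hsorted, splitOff_sorted,
      fun a ha b hb => (hfree_lt a ha).trans_le (order_lt_of_mem_splitOff hb).1⟩
  · intro b hb
    rcases List.mem_append.1 hb with hb | hb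
    · exact (hfree_lt b hb).trans_le hj
    · exact (order_lt_of_mem_splitOff hb).2
  · intro b hb
    simp only [List.mem_append] at hb
    rcases hb with (hb | hb) | hb
    · exact (hsub b (by simp [hb])).trans hold
    · exact subset_of_mem_splitOff hb
    · exact (hsub b (by simp [hb])).trans hold
  · have hperm : ((st.free ++ st.placed) ++ splitOff st.order j 0).Perm
        ((st.free ++ splitOff st.order j 0) ++ st.placed) := by
      simp only [List.perm_iff_count, List.count_append]; intro a; omega
    exact (hperm.pairwise_iff Separated.symm).1
      (pairwise_separated_append_of_subset pairwise_separated_splitOff hsep hsub)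
  · simp only [weight_append, weight_splitOff hj]
    linarith

structure IsHalfFull (st : State) : Prop extends st.IsPacking where
  zpow_le_weight_placed : 2 ^ (st.order - 1) ≤ weight st.placed

noncomputable def step (st : State) (x : ℝ) : State :=
  if st.placed = [] then ⟨sizeOrder x, [], [⟨sizeOrder x, 0⟩]⟩
  else if ∀ b ∈ st.free, b.order < sizeOrder x then
    (st.grow (max st.order (sizeOrder x) + 1)).allocate (sizeOrder x)
  else st.allocate (sizeOrder x)

lemma IsHalfFull.placed_ne_nil (h : st.IsHalfFull) : st.placed ≠ [] := by
  rintro hnil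
  have := h.zpow_le_weight_placed
  rw [hnil, weight_nil] at this
  exact (zpow_pos two_pos _).not_ge this

lemma IsHalfFull.allocate (h : st.IsHalfFull) (hk : ∃ b ∈ st.free, k ≤ b.order) :
    (st.allocate k).IsHalfFull ∧ ∃ q, (st.allocate k).placed = ⟨k, q⟩ :: st.placed := by
  obtain ⟨q, free, hq⟩ := exists_allocate_eq hk
  refine ⟨⟨h.toIsPacking.allocate hk, ?_⟩, q, by rw [hq]⟩
  rw [hq]
  show (2 : ℝ) ^ (st.order - 1) ≤ weight (⟨k, q⟩ :: st.placed)
  rw [weight_cons]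
  linarith [h.zpow_le_weight_placed, zpow_pos (two_pos (α := ℝ)) k]

lemma IsHalfFull.allocate_grow (h : st.IsHalfFull) (hlt : ∀ b ∈ st.free, b.order < k) :
    ((st.grow (max st.order k + 1)).allocate k).IsHalfFull ∧
      ∃ q, ((st.grow (max st.order k + 1)).allocate k).placed = ⟨k, q⟩ :: st.placed := by
  set j := max st.order k + 1
  have hk : ∃ b ∈ (st.grow j).free, k ≤ b.order :=
    ⟨buddy (j - 1) 0, List.mem_append_right _ (mem_splitOff.2 ⟨j - 1, by omega, by omega, rfl⟩),
      by simp only [buddy]; omega⟩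
  obtain ⟨q, free, hq⟩ := exists_allocate_eq hk
  refine ⟨⟨(h.grow (by omega)).allocate hk, ?_⟩, q, by rw [hq]; rfl⟩
  rw [hq]
  show (2 : ℝ) ^ (j - 1) ≤ weight (⟨k, q⟩ :: st.placed)
  have hfree : weight st.free ≤ 2 ^ k := weight_le_of_sorted h.free_sorted hlt
  have hweight := h.zpow_le_weight
  rw [weight_cons, show j - 1 = max st.order k by omega]
  rcases le_total st.order k with hle | hle
  · rw [max_eq_right hle]
    linarith [h.zpow_le_weight_placed, zpow_pos (two_pos (α := ℝ)) (st.order - 1)]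
  · rw [max_eq_left hle]
    linarith

lemma isHalfFull_step (h : st.placed = [] ∨ st.IsHalfFull) (x : ℝ) :
    (step st x).IsHalfFull ∧ ∃ q, (step st x).placed = ⟨sizeOrder x, q⟩ :: st.placed := by
  rcases h with hnil | h
  · rw [step, if_pos hnil, hnil]
    refine ⟨⟨⟨by simp, by simp, ?_, by simp, by simp⟩, by simp⟩, 0, rfl⟩
    simp only [List.nil_append, List.mem_singleton]
    rintro b rfl
    exact subset_rfl
  rw [step, if_neg h.placed_ne_nil]
  split_ifs with hlt
  · exact h.allocate_grow hlt
  · exact h.allocate (by simpa using hlt)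

end State

open State

noncomputable def run (l : List ℝ) : State := l.foldl step ⟨0, [], []⟩

noncomputable def strategy (l : List ℝ) : ℝ × ℝ := ((run l).placed.head?.map Brick.corner).getD 0

lemma run_append_singleton (l : List ℝ) (y : ℝ) : run (l ++ [y]) = step (run l) y := by
  rw [run, run, List.foldl_append, List.foldl_cons, List.foldl_nil]

lemma placed_run_eq_nil_or_isHalfFull (l : List ℝ) :
    (run l).placed = [] ∨ (run l).IsHalfFull := by
  induction l using List.reverseRecOn with
  | nil => exact Or.inl rfl
  | append_singleton l y ih =>
    rw [run_append_singleton]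
    exact Or.inr (isHalfFull_step ih y).1

lemma isHalfFull_run {l : List ℝ} (hl : l ≠ []) : (run l).IsHalfFull := by
  obtain ⟨l, y, rfl⟩ := List.eq_nil_or_concat' l |>.resolve_left hl
  rw [run_append_singleton]
  exact (isHalfFull_step (placed_run_eq_nil_or_isHalfFull l) y).1

lemma placed_run_append_singleton (l : List ℝ) (y : ℝ) :
    (run (l ++ [y])).placed = ⟨sizeOrder y, strategy (l ++ [y])⟩ :: (run l).placed := by
  obtain ⟨q, hq⟩ := (isHalfFull_step (placed_run_eq_nil_or_isHalfFull l) y).2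
  rw [strategy, run_append_singleton, hq]
  rfl

noncomputable def brickOf (l : List ℝ) (i : Fin l.length) : Brick :=
  ⟨sizeOrder l[i], strategy (l.take (i + 1))⟩

lemma placed_run (l : List ℝ) : (run l).placed.reverse = List.ofFn (brickOf l) := by
  induction l using List.reverseRecOn with
  | nil => rfl
  | append_singleton l y ih =>
    rw [placed_run_append_singleton, List.reverse_cons, ih]
    refine List.ext_getElem (by simp) fun i h₁ h₂ => ?_
    rcases lt_or_eq_of_le (Nat.le_of_lt_succ (by simpa using h₂)) with hi | rfl
    · rw [List.getElem_ofFn, List.getElem_append_left (by simpa using hi), List.getElem_ofFn]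
      simp [brickOf, List.getElem_append_left hi, List.take_append_of_le_length hi]
    · rw [List.getElem_ofFn, List.getElem_append_right (by simp)]
      simp [brickOf, List.take_of_length_le]

lemma separated_brickOf (l : List ℝ) {i j : Fin l.length} (hij : i < j) :
    Separated (brickOf l i) (brickOf l j) := by
  have hsep := (isHalfFull_run (List.ne_nil_of_length_pos i.pos)).separated
  have hplaced := List.pairwise_reverse.2 ((List.pairwise_append.1 hsep).2.1.imp Separated.symm)
  rw [placed_run] at hplaced
  exact List.pairwise_ofFn.1 hplaced hij

lemma brickOf_mem_placed (l : List ℝ) (i : Fin l.length) : brickOf l i ∈ (run l).placed := by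
  rw [← List.mem_reverse, placed_run]
  exact List.mem_ofFn.2 ⟨i, rfl⟩

lemma weight_placed_run (l : List ℝ) :
    weight (run l).placed = (l.map fun y => (2 : ℝ) ^ sizeOrder y).sum := by
  have hrev : weight (run l).placed = weight (run l).placed.reverse := by simp [weight]
  rw [hrev, placed_run, weight, List.map_ofFn]
  exact congrArg List.sum (List.ofFn_getElem_eq_map l fun y => (2 : ℝ) ^ sizeOrder y)

lemma weight_placed_run_le {l : List ℝ} (hl : ∀ y ∈ l, 0 < y) :
    weight (run l).placed ≤ 2 * (l.map (· ^ 2)).sum := by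
  rw [weight_placed_run, ← List.sum_map_mul_left]
  exact List.sum_le_sum fun y hy => zpow_sizeOrder_le (hl y hy)

/-- The container of order `T` fits in a square of area `2 ^ (T + 1)`, at most four times the
weight of the occupied bricks. -/
lemma minSide_sq_le_weight {l : List ℝ} (hl : l ≠ []) {S : Set (ℝ × ℝ)} (hS : S.Nonempty)
    (hsub : S ⊆ ⋃ b ∈ (run l).placed, b.toSet) : minSide S ^ 2 ≤ 4 * weight (run l).placed := by
  have h := isHalfFull_run hl
  set T := (run l).order
  have hsquare : S ⊆ Icc 0 (0 + √2 ^ (T + 1)) ×ˢ Icc 0 (0 + √2 ^ (T + 1)) := by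
    refine hsub.trans (iUnion₂_subset fun b hb => ?_)
    exact (h.subset_container b (List.mem_append_right _ hb)).trans (toSet_subset_square T 0)
  calc minSide S ^ 2 ≤ (√2 ^ (T + 1)) ^ 2 :=
        pow_le_pow_left₀ (minSide_nonneg hS) (minSide_le hS hsquare) 2
    _ = 4 * 2 ^ (T - 1) := by
        rw [sqrt_two_zpow_sq, show T + 1 = T - 1 + 2 by ring, zpow_add₀ two_ne_zero]
        norm_num [mul_comm]
    _ ≤ 4 * weight (run l).placed := by linarith [h.zpow_le_weight_placed]

lemma place_subset_brickOf {n : ℕ} {x : Fin n → ℝ} (hx : ∀ i, 0 < x i) {m : ℕ} (i : Fin n)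
    (hi : (i : ℕ) < m) :
    place strategy x i ⊆ (brickOf ((List.ofFn x).take m) ⟨i, by simp [hi]⟩).toSet := by
  have := placedSquare_subset_toSet (hx i) (strategy ((List.ofFn x).take (i + 1)))
  simpa [brickOf, place, List.take_take, Nat.min_eq_left (Nat.succ_le_of_lt hi)] using this

theorem validStrategy_strategy : ValidStrategy strategy := by
  intro n x hx i j hij
  wlog hlt : i < j generalizing i j
  · exact (this j i hij.symm (lt_of_le_of_ne (not_lt.1 hlt) hij.symm)).symm
  have hsep : Separated (brickOf ((List.ofFn x).take n) ⟨i, by simp⟩)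
      (brickOf ((List.ofFn x).take n) ⟨j, by simp⟩) :=
    separated_brickOf _ (Fin.mk_lt_mk.2 hlt)
  have hi := place_subset_brickOf hx i i.2
  have hj := place_subset_brickOf hx j j.2
  exact Disjoint.mono (interior_mono hi) (interior_mono hj) hsep

end DynamicBrick

open DynamicBrick in
/-- The Dynamic Brick Algorithm maintains a packing density of at least 1/8: there is
a valid online placement strategy such that, at every stage `m` of every input
sequence, the total area of the first `m` squares is at least 1/8 of the area of the
smallest axis-parallel square enclosing them. -/
theorem dynamic_brick_density_lower_bound :
    ∃ σ : List ℝ → ℝ × ℝ, ValidStrategy σ ∧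
      ∀ (n : ℕ) (x : Fin n → ℝ), (∀ i, 0 < x i) →
        ∀ m : ℕ, 1 ≤ m → m ≤ n →
          (1 / 8) * (minSide (⋃ i : Fin n, ⋃ (_ : (i : ℕ) < m), place σ x i)) ^ 2 ≤
            ∑ i ∈ Finset.univ.filter (fun i : Fin n => (i : ℕ) < m), (x i) ^ 2 := by
  refine ⟨strategy, validStrategy_strategy, fun n x hx m hm hmn => ?_⟩
  set l := (List.ofFn x).take m
  have hl : l ≠ [] := List.ne_nil_of_length_pos (by simp [l]; omega)
  have hsub : (⋃ i : Fin n, ⋃ (_ : (i : ℕ) < m), place strategy x i) ⊆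
      ⋃ b ∈ (run l).placed, b.toSet :=
    iUnion₂_subset fun i hi =>
      (place_subset_brickOf hx i hi).trans (subset_biUnion_of_mem (brickOf_mem_placed l _))
  have hne : (⋃ i : Fin n, ⋃ (_ : (i : ℕ) < m), place strategy x i).Nonempty := by
    refine ⟨_, mem_iUnion₂.2 ⟨⟨0, by omega⟩, hm, ⟨le_rfl, ?_⟩, le_rfl, ?_⟩⟩ <;>
      linarith [hx ⟨0, by omega⟩]
  have hweight := weight_placed_run_le (l := l) fun y hy => by
    obtain ⟨i, -, rfl⟩ := List.mem_ofFn.1 (List.mem_of_mem_take hy)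
    exact hx i
  rw [List.map_take, List.map_ofFn, List.sum_take_ofFn] at hweight
  simp only [Function.comp_apply] at hweight
  linarith [minSide_sq_le_weight hl hne hsub]
end
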